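/- arXiv:1005.2427 — 5 statements merged into one kernel-verified Lean document; each statement's English description precedes it below -/
import Mathlib

section
/- Every vector ψ ∈ (ℂ^d)^{⊗N} admits a matrix product representation: there exist bond dimensions D_0 = D_N = 1 and D_i ≤ d^{min(i, N−i)} for 1 ≤ i ≤ N−1, and complex D_{i−1} × D_i matrices A_i^{[M]} (M ∈ {0,…,d−1}, i ∈ {1,…,N}), such that for every multi-index (M_1,…,M_N) the coefficient of ψ on the product basis state |M_1,…,M_N⟩ equals the scalar A_1^{[M_1]} A_2^{[M_2]} ⋯ A_N^{[M_N]}. In particular every state on N sites is a matrix product state of bond dimension at most d^{⌈N/2⌉}. -/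
/-!
Cut the chain at `c = ⌈N/2⌉`. For `i < c` the index on bond `i` records the first `i` physical
indices, so the tensors `A i` with `i + 1 < c` append their physical index to it; `A (c - 1)` reads
the recorded prefix, its own index and the record on bond `c` of the remaining `N - c` indices,
and returns the corresponding coefficient of `ψ`; for `i ≥ c` the index on bond `i` is a guess of
the last `N - i` physical indices, which the tensors `A i` with `i ≥ c` check off one at a time.
A record of `k` indices in `Fin d` is stored in `Fin (d ^ k)` through its base-`d` digits, so bond
`i` has dimension exactly `d ^ min i (N - i)`.
-/

open Matrix

/-- The matrix product `A_1^{[M_1]} A_2^{[M_2]} ⋯ A_N^{[M_N]}` of site-dependent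
Kraus operators with bond dimensions `D 0, D 1, …, D N`. -/
noncomputable def mpsProd {d : ℕ} {D : ℕ → ℕ}
    (A : (i : ℕ) → Fin d → Matrix (Fin (D i)) (Fin (D (i + 1))) ℂ) :
    (N : ℕ) → (Fin N → Fin d) → Matrix (Fin (D 0)) (Fin (D N)) ℂ
  | 0 => fun _ => 1
  | (N + 1) => fun M => mpsProd A N (fun i => M i.castSucc) * A N (M (Fin.last N))

namespace MPS

variable {d : ℕ}

def digits [NeZero d] {k : ℕ} (p : Fin (d ^ k)) (j : ℕ) : Fin d :=
  if h : j < k then finFunctionFinEquiv.symm p ⟨j, h⟩ else 0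

def ofDigits (k : ℕ) (f : ℕ → Fin d) : Fin (d ^ k) :=
  finFunctionFinEquiv fun j : Fin k => f j

theorem digits_ofDigits [NeZero d] {k j : ℕ} (f : ℕ → Fin d) (hj : j < k) :
    digits (ofDigits k f) j = f j := by
  simp [digits, ofDigits, hj]

theorem eq_ofDigits_iff [NeZero d] {k : ℕ} {p : Fin (d ^ k)} {f : ℕ → Fin d} :
    p = ofDigits k f ↔ ∀ j < k, digits p j = f j := by
  rw [ofDigits, ← Equiv.symm_apply_eq, funext_iff, Fin.forall_iff]
  refine forall₂_congr fun j hj => ?_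
  simp [digits, hj]

section Tensors

variable [NeZero d] {k k' : ℕ}

def snocTensor (i : ℕ) (m : Fin d) : Matrix (Fin (d ^ k)) (Fin (d ^ k')) ℂ :=
  of fun p q => if digits q i = m ∧ p = ofDigits k (digits q) then 1 else 0

def consTensor (m : Fin d) : Matrix (Fin (d ^ k)) (Fin (d ^ k')) ℂ :=
  of fun p q => if p = ofDigits k fun j => if j = 0 then m else digits q (j - 1) then 1 else 0

def coeffTensor {N : ℕ} (ψ : (Fin N → Fin d) → ℂ) (i : ℕ) (m : Fin d) :
    Matrix (Fin (d ^ k)) (Fin (d ^ k')) ℂ :=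
  of fun p q => ψ fun j =>
    if (j : ℕ) < i then digits p j else if (j : ℕ) = i then m else digits q (j - (i + 1))

theorem mul_snocTensor_apply {α : Type*} (X : Matrix α (Fin (d ^ k)) ℂ) (i : ℕ) (m : Fin d)
    (a : α) (q : Fin (d ^ k')) :
    (X * (snocTensor i m : Matrix (Fin (d ^ k)) (Fin (d ^ k')) ℂ)) a q =
      if digits q i = m then X a (ofDigits k (digits q)) else 0 := by
  simp [snocTensor, mul_apply, ite_and]

theorem mul_consTensor_apply {α : Type*} (X : Matrix α (Fin (d ^ k)) ℂ) (m : Fin d)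
    (a : α) (q : Fin (d ^ k')) :
    (X * (consTensor m : Matrix (Fin (d ^ k)) (Fin (d ^ k')) ℂ)) a q =
      X a (ofDigits k fun j => if j = 0 then m else digits q (j - 1)) := by
  simp [consTensor, mul_apply]

end Tensors

variable [NeZero d] {N : ℕ}

noncomputable def mpsTensor (ψ : (Fin N → Fin d) → ℂ) (i : ℕ) (m : Fin d) :
    Matrix (Fin (d ^ min i (N - i))) (Fin (d ^ min (i + 1) (N - (i + 1)))) ℂ :=
  if i + 1 < (N + 1) / 2 then snocTensor i m
  else if i + 1 = (N + 1) / 2 then coeffTensor ψ i m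
  else consTensor m

/-- The ascription states the product at the β-reduced bond types, where the lemmas about
`Matrix.mul` rewrite. -/
theorem mpsProd_mpsTensor_succ (ψ : (Fin N → Fin d) → ℂ) (f : ℕ → Fin d) (i : ℕ) :
    mpsProd (mpsTensor ψ) (i + 1) (f ∘ Fin.val) =
      (mpsProd (mpsTensor ψ) i (f ∘ Fin.val) :
        Matrix (Fin (d ^ min 0 (N - 0))) (Fin (d ^ min i (N - i))) ℂ) * mpsTensor ψ i (f i) :=
  rfl

variable (ψ : (Fin N → Fin d) → ℂ) (f : ℕ → Fin d) (a : Fin (d ^ min 0 (N - 0)))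

theorem mpsProd_mpsTensor_left {i : ℕ} (hi : i < (N + 1) / 2) (q : Fin (d ^ min i (N - i))) :
    mpsProd (mpsTensor ψ) i (f ∘ Fin.val) a q =
      if ∀ j < i, digits q j = f j then 1 else 0 := by
  induction i with
  | zero =>
    have : Subsingleton (Fin (d ^ min 0 (N - 0))) := by
      simp only [Nat.zero_min, pow_zero]
      infer_instance
    obtain rfl := Subsingleton.elim a q
    simp [mpsProd]
  | succ i ih =>
    have hq : ∀ j < i, digits (ofDigits (min i (N - i)) (digits q)) j = digits q j :=
      fun j hj => digits_ofDigits _ (by omega)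
    rw [mpsProd_mpsTensor_succ, mpsTensor, if_pos hi, mul_snocTensor_apply, ih (by omega)]
    simp only [Nat.forall_lt_succ_right, ← ite_and, and_comm]
    exact if_congr (and_congr_right' (forall₂_congr fun j hj => by rw [hq j hj])) rfl rfl

theorem mpsProd_mpsTensor_center {i : ℕ} (hi : i + 1 = (N + 1) / 2)
    (q : Fin (d ^ min (i + 1) (N - (i + 1)))) :
    mpsProd (mpsTensor ψ) (i + 1) (f ∘ Fin.val) a q =
      ψ fun j => if (j : ℕ) < i + 1 then f j else digits q (j - (i + 1)) := by
  have hp (p : Fin (d ^ min i (N - i))) : (∀ j < i, digits p j = f j) ↔ p = ofDigits _ f := by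
    rw [eq_ofDigits_iff]
    constructor <;> intro h j hj <;> exact h j (by omega)
  rw [mpsProd_mpsTensor_succ, mpsTensor, if_neg (by omega), if_pos hi, mul_apply]
  simp only [mpsProd_mpsTensor_left ψ f a (show i < (N + 1) / 2 by omega), hp, ite_mul, one_mul,
    zero_mul, Finset.sum_ite_eq', Finset.mem_univ, if_true, coeffTensor, of_apply]
  congr 1
  funext j
  rcases lt_trichotomy (j : ℕ) i with hj | hj | hj
  · rw [if_pos hj, if_pos (by omega), digits_ofDigits f (by omega : (j : ℕ) < min i (N - i))]
  · rw [if_neg (by omega), if_pos hj, if_pos (by omega), hj]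
  · rw [if_neg (by omega), if_neg (by omega), if_neg (by omega)]

theorem mpsProd_mpsTensor_right (hN : 1 ≤ N) {i : ℕ} (hi : (N + 1) / 2 ≤ i) (hiN : i ≤ N)
    (q : Fin (d ^ min i (N - i))) :
    mpsProd (mpsTensor ψ) i (f ∘ Fin.val) a q =
      ψ fun j => if (j : ℕ) < i then f j else digits q (j - i) := by
  induction i with
  | zero => omega
  | succ i ih =>
    rcases hi.eq_or_lt with hc | hc
    · exact mpsProd_mpsTensor_center ψ f a hc.symm q
    rw [mpsProd_mpsTensor_succ, mpsTensor, if_neg (by omega), if_neg (by omega),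
      mul_consTensor_apply, ih (by omega) (by omega)]
    congr 1
    funext j
    rcases lt_or_ge (j : ℕ) i with hj | hj
    · rw [if_pos hj, if_pos (by omega)]
    have hj' : (j : ℕ) - i < min i (N - i) := by omega
    rw [if_neg hj.not_gt, digits_ofDigits _ hj']
    rcases hj.eq_or_lt with hj | hj
    · rw [if_pos (by omega), if_pos (by omega), hj]
    · rw [if_neg (by omega), if_neg (by omega), Nat.sub_sub]

end MPS

theorem exists_mps_representation (d N : ℕ) (hd : 1 ≤ d) (hN : 1 ≤ N)
    (ψ : (Fin N → Fin d) → ℂ) :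
    ∃ (D : ℕ → ℕ) (A : (i : ℕ) → Fin d → Matrix (Fin (D i)) (Fin (D (i + 1))) ℂ),
      D 0 = 1 ∧ D N = 1 ∧
      (∀ i, 1 ≤ i → i ≤ N - 1 → D i ≤ d ^ min i (N - i)) ∧
      ∀ (M : Fin N → Fin d) (a : Fin (D 0)) (b : Fin (D N)),
        ψ M = mpsProd A N M a b := by
  have : NeZero d := ⟨by omega⟩
  refine ⟨fun i => d ^ min i (N - i), MPS.mpsTensor ψ, by simp, by simp,
    fun i _ _ => le_rfl, ?_⟩
  intro M a b
  let f : ℕ → Fin d := fun j => if h : j < N then M ⟨j, h⟩ else 0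
  have hM : M = f ∘ Fin.val := funext fun j => by simp [f]
  rw [hM, MPS.mpsProd_mpsTensor_right ψ f a hN (by omega) le_rfl]
  simp [Function.comp_def]
end

section
/- Let A^{[M]} (M ∈ {0,…,d−1}) be complex D × D matrices, u a d × d unitary matrix, U a D × D unitary matrix and θ ∈ ℝ, and suppose Σ_{M'} u_{M,M'} A^{[M']} = e^{iθ} U A^{[M]} U† for every M. Then for every N ≥ 1 the periodic-boundary MPS |Ψ_N⟩ defined by the matrices A^{[M]} satisfies u^{⊗N} |Ψ_N⟩ = e^{iθN} |Ψ_N⟩. -/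
open Matrix

/-!
STATEMENT 4: If `Σ_{M'} u_{M,M'} A^{[M']} = e^{iθ} U A^{[M]} U†` with `u, U` unitary,
then the periodic-boundary MPS satisfies `u^{⊗N} |Ψ_N⟩ = e^{iθN} |Ψ_N⟩` for every `N ≥ 1`.
-/

/-- The periodic-boundary translationally invariant MPS on `N` sites, built from
`D × D` Kraus operators `A^{[M]}`. -/
noncomputable def mpsPBC {d D : ℕ} (A : Fin d → Matrix (Fin D) (Fin D) ℂ) (N : ℕ) :
    (Fin N → Fin d) → ℂ :=
  fun M => Matrix.trace ((List.ofFn fun i => A (M i)).prod)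

/-- The `N`-fold Kronecker power `u^{⊗N}`, acting as `u` on each tensor factor of
`(ℂ^d)^{⊗N}`. -/
noncomputable def kronPow {d : ℕ} (u : Matrix (Fin d) (Fin d) ℂ) (N : ℕ) :
    Matrix (Fin N → Fin d) (Fin N → Fin d) ℂ :=
  Matrix.of fun M M' => ∏ i, u (M i) (M' i)

/-!
The operator `u^{⊗N}` acts on `|Ψ_N⟩` by replacing every `A^{[M]}` with
`Σ_{M'} u_{M,M'} A^{[M']}` (the matrix product is multilinear in its factors), which by hypothesis
is `e^{iθ} U A^{[M]} U†`. The phases multiply to `e^{iθN}`, and the gauge `U` drops out because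
`A ↦ U A U†` is multiplicative and the trace is invariant under conjugation.
-/

theorem List.prod_ofFn_sum_smul {R A ι : Type*} [CommSemiring R] [Semiring A] [Algebra R A]
    [Fintype ι] {N : ℕ} (c : Fin N → ι → R) (B : ι → A) :
    (List.ofFn fun i => ∑ j, c i j • B j).prod =
      ∑ g : Fin N → ι, (∏ i, c i (g i)) • (List.ofFn fun i => B (g i)).prod := by
  simp only [← MultilinearMap.mkPiAlgebraFin_apply (R := R), MultilinearMap.map_sum,
    MultilinearMap.map_smul_univ]

theorem kronPow_mulVec_mpsPBC {d D : ℕ} (u : Matrix (Fin d) (Fin d) ℂ)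
    (A : Fin d → Matrix (Fin D) (Fin D) ℂ) (N : ℕ) :
    kronPow u N *ᵥ mpsPBC A N = mpsPBC (fun m => ∑ m', u m m' • A m') N := by
  ext M
  simp only [mpsPBC, List.prod_ofFn_sum_smul, trace_sum, trace_smul, mulVec, dotProduct,
    kronPow, of_apply, smul_eq_mul]

theorem mpsPBC_smul {d D : ℕ} (c : ℂ) (A : Fin d → Matrix (Fin D) (Fin D) ℂ) (N : ℕ) :
    mpsPBC (fun m => c • A m) N = c ^ N • mpsPBC A N := by
  ext M
  simp only [mpsPBC, ← MultilinearMap.mkPiAlgebraFin_apply (R := ℂ),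
    MultilinearMap.map_smul_univ, Finset.prod_const, Finset.card_univ, Fintype.card_fin,
    trace_smul, Pi.smul_apply]

theorem mpsPBC_conj {d D : ℕ} {U V : Matrix (Fin D) (Fin D) ℂ} (hVU : V * U = 1)
    (A : Fin d → Matrix (Fin D) (Fin D) ℂ) (N : ℕ) :
    mpsPBC (fun m => U * A m * V) N = mpsPBC A N := by
  let P : (Matrix (Fin D) (Fin D) ℂ)ˣ := ⟨U, V, mul_eq_one_comm.mp hVU, hVU⟩
  let conj := MulSemiringAction.toRingHom _ (Matrix (Fin D) (Fin D) ℂ) (ConjAct.toConjAct P)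
  have hconj (X : Matrix (Fin D) (Fin D) ℂ) : U * X * V = conj X := rfl
  ext M
  simp only [mpsPBC, hconj]
  rw [← Function.comp_def conj, ← List.map_ofFn, ← map_list_prod]
  exact trace_units_conj P _

theorem mps_symmetry_sufficiency_general (d D : ℕ)
    (A : Fin d → Matrix (Fin D) (Fin D) ℂ)
    (u : Matrix (Fin d) (Fin d) ℂ) (U : Matrix (Fin D) (Fin D) ℂ) (θ : ℝ)
    (hU : Uᴴ * U = 1)
    (hA : ∀ M, ∑ M', u M M' • A M' = Complex.exp (θ * Complex.I) • (U * A M * Uᴴ)) :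
    ∀ N, 1 ≤ N →
      (kronPow u N).mulVec (mpsPBC A N) =
        Complex.exp (θ * N * Complex.I) • mpsPBC A N := by
  intro N _
  have hphase : Complex.exp (θ * Complex.I) ^ N = Complex.exp (θ * N * Complex.I) := by
    rw [← Complex.exp_nat_mul]
    ring_nf
  rw [kronPow_mulVec_mpsPBC, funext hA, mpsPBC_smul, mpsPBC_conj hU, hphase]

theorem mps_symmetry_sufficiency (d D : ℕ) (hd : 1 ≤ d) (hD : 1 ≤ D)
    (A : Fin d → Matrix (Fin D) (Fin D) ℂ)
    (u : Matrix (Fin d) (Fin d) ℂ) (U : Matrix (Fin D) (Fin D) ℂ) (θ : ℝ)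
    (hu : uᴴ * u = 1) (hU : Uᴴ * U = 1)
    (hA : ∀ M, ∑ M', u M M' • A M' = Complex.exp (θ * Complex.I) • (U * A M * Uᴴ)) :
    ∀ N, 1 ≤ N →
      (kronPow u N).mulVec (mpsPBC A N) =
        Complex.exp (θ * N * Complex.I) • mpsPBC A N :=
  mps_symmetry_sufficiency_general d D A u U θ hU hA
end

section
/- Let A^{[M]} (M ∈ {0,…,d−1}) be complex D × D matrices defining an injective MPS, i.e. there exists L_0 such that the matrices A^{[M_1]} ⋯ A^{[M_{L_0}]}, over all multi-indices (M_1,…,M_{L_0}), span the full matrix algebra of D × D complex matrices. Let u be a d × d unitary and θ ∈ ℝ, and suppose that for every N ≥ L_0 the periodic-boundary MPS |Ψ_N⟩ defined by the A^{[M]} satisfies u^{⊗N} |Ψ_N⟩ = e^{iθN} |Ψ_N⟩. Then there exists an invertible D × D matrix U such that Σ_{M'} u_{M,M'} A^{[M']} = e^{iθ} U A^{[M]} U^{−1} for every M. -/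
/-!
Put `B m = e^{-iθ} ∑ u_{m m'} A m'`. Acting with `u^{⊗N}` on `|Ψ_N⟩` replaces every `A` by
`∑ u A`, so the symmetry says that `A` and `B` generate the same MPS for `N ≥ L₀`: all words of
length `≥ L₀` have the same trace. Since `u` is invertible, the words of length `L₀` in `B` span
as well, and nondegeneracy of the trace form makes `A_w ↦ B_w` (for `|w| ≥ L₀`) a well-defined
linear map of `M_D(ℂ)`. It is multiplicative on words, hence an algebra automorphism sending
`A m` to `B m`, and by Skolem–Noether it is conjugation by an invertible `U`.
-/

open Matrix

theorem List.prod_ofFn_sum {R ι : Type*} [Semiring R] [Fintype ι] :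
    ∀ {N : ℕ} (f : Fin N → ι → R),
      (List.ofFn fun i => ∑ j, f i j).prod = ∑ g : Fin N → ι, (List.ofFn fun i => f i (g i)).prod
  | 0, f => by simp
  | N + 1, f => by
    rw [← (Fin.consEquiv fun _ => ι).sum_comp, Fintype.sum_prod_type]
    simp only [List.ofFn_succ, List.prod_cons, Fin.consEquiv_apply, Fin.cons_zero, Fin.cons_succ,
      List.prod_ofFn_sum fun i => f i.succ, Finset.sum_mul_sum]

theorem List.prod_ofFn_smul {R A : Type*} [CommSemiring R] [Semiring A] [Algebra R A] :
    ∀ {N : ℕ} (c : Fin N → R) (x : Fin N → A),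
      (List.ofFn fun i => c i • x i).prod = (∏ i, c i) • (List.ofFn x).prod
  | 0, c, x => by simp
  | N + 1, c, x => by
    simp only [List.ofFn_succ, List.prod_cons, List.prod_ofFn_smul fun i => c i.succ,
      Fin.prod_univ_succ, smul_mul_smul_comm]

theorem Submodule.span_range_le_span_range_sum_smul {R M ι : Type*} [CommSemiring R]
    [AddCommMonoid M] [Module R M] [Fintype ι] [DecidableEq ι] {v w : Matrix ι ι R}
    (hwv : w * v = 1) (x : ι → M) :
    span R (Set.range x) ≤ span R (Set.range fun i => ∑ j, v i j • x j) := by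
  rw [span_le]
  rintro _ ⟨i, rfl⟩
  have hx : x i = ∑ j, w i j • ∑ k, v j k • x k := calc
    x i = ∑ k, (w * v) i k • x k := by simp [hwv, one_apply, ite_smul]
    _ = ∑ j, w i j • ∑ k, v j k • x k := by
      simp only [mul_apply, Finset.sum_smul, Finset.smul_sum, smul_smul]
      exact Finset.sum_comm
  rw [hx]
  exact sum_mem fun j _ => smul_mem _ _ (subset_span ⟨j, rfl⟩)

theorem Submodule.span_range_prod_ofFn {R A ι : Type*} [CommSemiring R] [Semiring A]
    [Algebra R A] (x : ι → A) (L : ℕ) :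
    span R (Set.range fun M : Fin L → ι => (List.ofFn fun i => x (M i)).prod) =
      span R (Set.range x) ^ L := by
  rw [span_pow]
  congr 1
  ext a
  rw [Set.mem_pow]
  constructor
  · rintro ⟨M, rfl⟩
    exact ⟨fun i => ⟨x (M i), M i, rfl⟩, rfl⟩
  · rintro ⟨f, rfl⟩
    choose M hM using fun i => (f i).2
    exact ⟨M, by simp only [hM]⟩

theorem Matrix.eq_zero_of_trace_mul_eq_zero {K n κ : Type*} [Field K] [Fintype n]
    {v : κ → Matrix n n K} (hv : Submodule.span K (Set.range v) = ⊤)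
    {X : Matrix n n K} (hX : ∀ j, trace (X * v j) = 0) : X = 0 := by
  have hzero : traceLinearMap n K K ∘ₗ LinearMap.mulLeft K X = 0 :=
    LinearMap.ext_on_range hv fun j => by simpa using hX j
  rw [ext_iff_trace_mul_right]
  intro Y
  simpa using LinearMap.congr_fun hzero Y

theorem Matrix.exists_linearMap_of_trace_mul_eq {K n ι κ : Type*} [Field K] [Fintype n]
    (a b : ι → Matrix n n K) (v w : κ → Matrix n n K)
    (hw : Submodule.span K (Set.range w) = ⊤)
    (h : ∀ i j, trace (a i * v j) = trace (b i * w j)) :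
    ∃ f : Matrix n n K →ₗ[K] Matrix n n K, ∀ i, f (a i) = b i := by
  let pairing (v : κ → Matrix n n K) : Matrix n n K →ₗ[K] κ → K :=
    LinearMap.pi fun j => traceLinearMap n K K ∘ₗ LinearMap.mulRight K (v j)
  have hker : LinearMap.ker (pairing w) = ⊥ :=
    LinearMap.ker_eq_bot'.2 fun X hX =>
      eq_zero_of_trace_mul_eq_zero hw fun j => by simpa [pairing] using congrFun hX j
  obtain ⟨g, hg⟩ := (pairing w).exists_leftInverse_of_injective hker
  refine ⟨g ∘ₗ pairing v, fun i => ?_⟩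
  have hab : pairing v (a i) = pairing w (b i) := funext fun j => by simpa [pairing] using h i j
  rw [LinearMap.comp_apply, hab, ← LinearMap.comp_apply, hg, LinearMap.id_apply]

theorem LinearMap.map_mul_of_span_range_eq_top {R A B ι : Type*} [CommSemiring R] [Semiring A]
    [Algebra R A] [Semiring B] [Algebra R B] {v : ι → A}
    (hv : Submodule.span R (Set.range v) = ⊤) (f : A →ₗ[R] B)
    (h : ∀ i j, f (v i * v j) = f (v i) * f (v j)) (x y : A) : f (x * y) = f x * f y := by
  have hright : ∀ j x, f (x * v j) = f x * f (v j) := fun j =>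
    LinearMap.congr_fun (ext_on_range hv (f := f ∘ₗ mulRight R (v j))
      (g := mulRight R (f (v j)) ∘ₗ f) fun i => h i j)
  exact LinearMap.congr_fun (ext_on_range hv (f := f ∘ₗ mulLeft R x)
    (g := mulLeft R (f x) ∘ₗ f) fun j => hright j x) y

theorem AlgEquiv.exists_isUnit_matrix_eq_conj {K n : Type*} [Field K] [Fintype n]
    [DecidableEq n] (f : Matrix n n K ≃ₐ[K] Matrix n n K) :
    ∃ U : Matrix n n K, IsUnit U ∧ ∀ X, f X = U * X * U⁻¹ := by
  -- Skolem–Noether for `Module.End K (n → K)`, transported along `toLinAlgEquiv'`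
  obtain ⟨T, hT⟩ :=
    ((toLinAlgEquiv'.symm.trans f).trans toLinAlgEquiv').eq_linearEquivConjAlgEquiv
  set U := LinearMap.toMatrixAlgEquiv' (T : Module.End K (n → K))
  have hinv : U * LinearMap.toMatrixAlgEquiv' (T.symm : Module.End K (n → K)) = 1 := by
    rw [← map_mul, ← map_one LinearMap.toMatrixAlgEquiv']
    congr 1
    ext
    simp
  refine ⟨U, (isUnit_iff_isUnit_det U).2 (isUnit_det_of_right_inverse hinv), fun X => ?_⟩
  have hX := congrArg (fun g => LinearMap.toMatrixAlgEquiv' (g (toLinAlgEquiv' X))) hT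
  simp only [AlgEquiv.trans_apply, AlgEquiv.symm_apply_apply, LinearEquiv.conjAlgEquiv_apply] at hX
  rw [LinearMap.toMatrixAlgEquiv'_toLinAlgEquiv', ← Module.End.mul_eq_comp,
    ← Module.End.mul_eq_comp, map_mul, map_mul, LinearMap.toMatrixAlgEquiv'_toLinAlgEquiv'] at hX
  rw [hX, inv_eq_right_inv hinv, mul_assoc]

theorem Matrix.exists_algEquiv_of_trace_prod_eq {K n ι : Type*} [Field K] [Fintype n]
    [DecidableEq n] {A B : ι → Matrix n n K} {L : ℕ}
    (hA : Submodule.span K (Set.range A) ^ L = ⊤) (hB : Submodule.span K (Set.range B) ^ L = ⊤)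
    (htr : ∀ w : List ι, L ≤ w.length → trace (w.map B).prod = trace (w.map A).prod) :
    ∃ f : Matrix n n K ≃ₐ[K] Matrix n n K, ∀ i, f (A i) = B i := by
  rw [← Submodule.span_range_prod_ofFn] at hA hB
  have hofFn (X : ι → Matrix n n K) (M : Fin L → ι) :
      (List.ofFn fun i => X (M i)).prod = ((List.ofFn M).map X).prod := by
    rw [List.map_ofFn]; rfl
  obtain ⟨f, hf⟩ := exists_linearMap_of_trace_mul_eq
    (fun w : {w : List ι // L ≤ w.length} => (w.1.map A).prod) (fun w => (w.1.map B).prod)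
    (fun M : Fin L → ι => (List.ofFn fun i => A (M i)).prod)
    (fun M => (List.ofFn fun i => B (M i)).prod) hB fun w M => by
      simpa only [hofFn, List.prod_append, List.map_append] using
        (htr (w.1 ++ List.ofFn M) (by simp [w.2.trans])).symm
  have hword (w : List ι) (hw : L ≤ w.length) : f (w.map A).prod = (w.map B).prod := hf ⟨w, hw⟩
  have hmul : ∀ x y, f (x * y) = f x * f y := f.map_mul_of_span_range_eq_top hA fun M M' => by
    simp only [hofFn, ← List.prod_append, ← List.map_append]
    rw [hword, hword, hword] <;> simp
  have hsurj : Function.Surjective f := by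
    rw [← LinearMap.range_eq_top, eq_top_iff, ← hB, Submodule.span_le]
    rintro _ ⟨M, rfl⟩
    exact ⟨_, by simpa only [hofFn] using hword (List.ofFn M) (by simp)⟩
  have hone : f 1 = 1 := by
    obtain ⟨x, hx⟩ := hsurj 1
    calc f 1 = f 1 * f x := by rw [hx, mul_one]
      _ = 1 := by rw [← hmul, one_mul, hx]
  have hletter (i : ι) (x : Matrix n n K) : f (x * A i) = f x * B i :=
    LinearMap.congr_fun (LinearMap.ext_on_range hA (f := f ∘ₗ LinearMap.mulRight K (A i))
      (g := LinearMap.mulRight K (B i) ∘ₗ f) fun M => by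
        simpa only [LinearMap.comp_apply, LinearMap.mulRight_apply, hofFn, List.map_append,
          List.prod_append, List.map_singleton, List.prod_singleton,
          hword (List.ofFn M) (by simp)] using hword (List.ofFn M ++ [i]) (by simp)) x
  refine ⟨AlgEquiv.ofBijective (AlgHom.ofLinearMap f hone hmul)
    ⟨LinearMap.injective_iff_surjective.2 hsurj, hsurj⟩, fun i => ?_⟩
  show f (A i) = B i
  simpa [hone] using hletter i 1

theorem kronPow_smul {d : ℕ} (c : ℂ) (u : Matrix (Fin d) (Fin d) ℂ) (N : ℕ) :
    kronPow (c • u) N = c ^ N • kronPow u N := by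
  ext M M'
  simp [kronPow, Finset.prod_mul_distrib]

theorem exists_isUnit_conj_of_mpsPBC_eq {d D L : ℕ} {A B : Fin d → Matrix (Fin D) (Fin D) ℂ}
    (hA : Submodule.span ℂ (Set.range A) ^ L = ⊤) (hB : Submodule.span ℂ (Set.range B) ^ L = ⊤)
    (h : ∀ N, L ≤ N → mpsPBC B N = mpsPBC A N) :
    ∃ U : Matrix (Fin D) (Fin D) ℂ, IsUnit U ∧ ∀ m, B m = U * A m * U⁻¹ := by
  obtain ⟨f, hf⟩ := exists_algEquiv_of_trace_prod_eq hA hB fun w hw => by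
    simpa [mpsPBC, ← List.map_ofFn] using congrFun (h _ hw) w.get
  obtain ⟨U, hU, hfU⟩ := f.exists_isUnit_matrix_eq_conj
  exact ⟨U, hU, fun m => by rw [← hf, hfU]⟩

theorem mps_symmetry_necessity_general (d D : ℕ)
    (A : Fin d → Matrix (Fin D) (Fin D) ℂ) (L0 : ℕ)
    (hinj : Submodule.span ℂ
        (Set.range fun M : Fin L0 → Fin d => (List.ofFn fun i => A (M i)).prod) = ⊤)
    (u : Matrix (Fin d) (Fin d) ℂ) (θ : ℝ) (hu : uᴴ * u = 1)
    (hsymm : ∀ N, L0 ≤ N →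
      (kronPow u N).mulVec (mpsPBC A N) =
        Complex.exp (θ * N * Complex.I) • mpsPBC A N) :
    ∃ U : Matrix (Fin D) (Fin D) ℂ, IsUnit U ∧
      ∀ M, ∑ M', u M M' • A M' = Complex.exp (θ * Complex.I) • (U * A M * U⁻¹) := by
  set c := Complex.exp (θ * Complex.I)
  have hc : c ≠ 0 := Complex.exp_ne_zero _
  set B : Fin d → Matrix (Fin D) (Fin D) ℂ := fun m => ∑ m', (c⁻¹ • u) m m' • A m'
  have hmps (N : ℕ) (hN : L0 ≤ N) : mpsPBC B N = mpsPBC A N := by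
    have hcN : Complex.exp (θ * N * Complex.I) = c ^ N := by
      rw [← Complex.exp_nat_mul]; ring_nf
    rw [← kronPow_mulVec_mpsPBC, kronPow_smul, smul_mulVec, hsymm N hN, hcN, smul_smul,
      inv_pow, inv_mul_cancel₀ (pow_ne_zero N hc), one_smul]
  have hunitary : (c • uᴴ) * (c⁻¹ • u) = 1 := by
    rw [smul_mul_smul_comm, mul_inv_cancel₀ hc, one_smul, hu]
  rw [Submodule.span_range_prod_ofFn] at hinj
  have hB : Submodule.span ℂ (Set.range B) ^ L0 = ⊤ := by
    rw [eq_top_iff, ← hinj]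
    exact pow_le_pow_left' (Submodule.span_range_le_span_range_sum_smul hunitary A) L0
  obtain ⟨U, hU, hconj⟩ := exists_isUnit_conj_of_mpsPBC_eq hinj hB hmps
  refine ⟨U, hU, fun m => ?_⟩
  rw [← hconj m]
  simp [B, Finset.smul_sum, smul_smul, hc]

theorem mps_symmetry_necessity (d D : ℕ) (hd : 1 ≤ d) (hD : 1 ≤ D)
    (A : Fin d → Matrix (Fin D) (Fin D) ℂ) (L0 : ℕ)
    (hinj : Submodule.span ℂ
        (Set.range fun M : Fin L0 → Fin d => (List.ofFn fun i => A (M i)).prod) = ⊤)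
    (u : Matrix (Fin d) (Fin d) ℂ) (θ : ℝ) (hu : uᴴ * u = 1)
    (hsymm : ∀ N, L0 ≤ N →
      (kronPow u N).mulVec (mpsPBC A N) =
        Complex.exp (θ * N * Complex.I) • mpsPBC A N) :
    ∃ U : Matrix (Fin D) (Fin D) ℂ, IsUnit U ∧
      ∀ M, ∑ M', u M M' • A M' = Complex.exp (θ * Complex.I) • (U * A M * U⁻¹) :=
  mps_symmetry_necessity_general d D A L0 hinj u θ hu hsymm
end

section
/- Let A^{[M]} (M ∈ {0,…,d−1}) be complex D × D matrices, B a d × d complex matrix and X a D × D complex matrix, and suppose Σ_{M'} B_{M,M'} A^{[M']} = X A^{[M]} − A^{[M]} X for every M. Then for every N ≥ 1 the periodic-boundary MPS |Ψ_N⟩ defined by the A^{[M]} satisfies (Σ_{i=1}^N B^{(i)}) |Ψ_N⟩ = 0, where B^{(i)} denotes the operator on (ℂ^d)^{⊗N} acting as B on the i-th tensor factor and as the identity on all other factors. -/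
/-!
The total charge acts on a coefficient `Tr (A^{[M_1]} ⋯ A^{[M_N]})` by replacing, one site `i` at
a time, the factor `A^{[M_i]}` with `∑_m B_{M_i m} A^{[m]} = [X, A^{[M_i]}]` (the product is
linear in each factor). Since `[X, ·]` is a derivation, these terms add up to
`[X, A^{[M_1]} ⋯ A^{[M_N]}]`, a commutator, whose trace vanishes.
-/

open Matrix

/-- The operator `B^{(i)}` on `(ℂ^d)^{⊗N}`, acting as `B` on the `i`-th tensor factor
and as the identity on every other factor. -/
noncomputable def siteOp {d : ℕ} (B : Matrix (Fin d) (Fin d) ℂ) (N : ℕ) (i : Fin N) :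
    Matrix (Fin N → Fin d) (Fin N → Fin d) ℂ :=
  Matrix.of fun M M' =>
    ∏ j, if j = i then B (M j) (M' j) else (if M j = M' j then 1 else 0)

open Function

theorem siteOp_mulVec_apply {d N : ℕ} (B : Matrix (Fin d) (Fin d) ℂ) (i : Fin N)
    (F : (Fin N → Fin d) → ℂ) (M : Fin N → Fin d) :
    (siteOp B N i *ᵥ F) M = ∑ m, B (M i) m * F (update M i m) := by
  have h_update : ∀ m, siteOp B N i M (update M i m) = B (M i) m := fun m => by
    rw [siteOp, of_apply, Finset.prod_eq_single i (fun j _ hj => by simp [hj]) (by simp)]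
    simp
  have h_off : ∀ M' ∉ Finset.univ.image (update M i), siteOp B N i M M' = 0 := fun M' hM' => by
    obtain ⟨j, hji, hj⟩ : ∃ j ≠ i, M j ≠ M' j := by
      by_contra! h
      exact hM' (Finset.mem_image.2 ⟨M' i, Finset.mem_univ _, funext fun j => by
        by_cases hji : j = i
        · subst hji; simp
        · simp [hji, h j hji]⟩)
    exact Finset.prod_eq_zero (Finset.mem_univ j) (by simp [hji, hj])
  calc (siteOp B N i *ᵥ F) M
      = ∑ M' ∈ Finset.univ.image (update M i), siteOp B N i M M' * F M' :=
        (Finset.sum_subset (Finset.subset_univ _) fun M' _ hM' => by simp [h_off M' hM']).symm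
    _ = ∑ m, B (M i) m * F (update M i m) := by
        rw [Finset.sum_image fun _ _ _ _ h => update_injective M i h]
        simp only [h_update]

theorem commutator_prod_ofFn {R : Type*} [Ring R] (X : R) :
    ∀ {n : ℕ} (a : Fin n → R),
      X * (List.ofFn a).prod - (List.ofFn a).prod * X
        = ∑ i, (List.ofFn (update a i (X * a i - a i * X))).prod
  | 0, a => by simp
  | n + 1, a => by
    obtain ⟨a₀, a, rfl⟩ : ∃ a₀ a', a = Fin.cons a₀ a' := ⟨_, _, (Fin.cons_self_tail a).symm⟩
    simp only [Fin.sum_univ_succ, Fin.update_cons_zero, ← Fin.cons_update, List.ofFn_succ,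
      Fin.cons_zero, Fin.cons_succ, List.prod_cons, ← Finset.mul_sum, ← commutator_prod_ofFn X a]
    noncomm_ring

theorem sum_mul_mpsPBC_update {d D N : ℕ} (A : Fin d → Matrix (Fin D) (Fin D) ℂ)
    (M : Fin N → Fin d) (i : Fin N) (c : Fin d → ℂ) :
    ∑ m, c m * mpsPBC A N (update M i m)
      = trace (List.ofFn (update (fun j => A (M j)) i (∑ m, c m • A m))).prod := by
  have h := (MultilinearMap.mkPiAlgebraFin ℂ N (Matrix (Fin D) (Fin D) ℂ)).map_update_sum
    Finset.univ i (fun m => c m • A m) (fun j => A (M j))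
  simp only [MultilinearMap.mkPiAlgebraFin_apply, MultilinearMap.map_update_smul] at h
  simp only [mpsPBC, apply_update (fun _ => A), h, trace_sum, trace_smul, smul_eq_mul]

theorem mps_infinitesimal_symmetry_general (d D : ℕ)
    (A : Fin d → Matrix (Fin D) (Fin D) ℂ)
    (B : Matrix (Fin d) (Fin d) ℂ) (X : Matrix (Fin D) (Fin D) ℂ)
    (hA : ∀ M, ∑ M', B M M' • A M' = X * A M - A M * X) :
    ∀ N, 1 ≤ N →
      (∑ i : Fin N, siteOp B N i).mulVec (mpsPBC A N) = 0 := by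
  intro N _
  funext M
  set P := (List.ofFn fun j => A (M j)).prod
  calc ((∑ i, siteOp B N i) *ᵥ mpsPBC A N) M
      = ∑ i, trace (List.ofFn (update (fun j => A (M j)) i (X * A (M i) - A (M i) * X))).prod := by
        simp only [sum_mulVec, Finset.sum_apply, siteOp_mulVec_apply, sum_mul_mpsPBC_update, hA]
    _ = trace (X * P - P * X) := by rw [commutator_prod_ofFn, trace_sum]
    _ = 0 := by rw [trace_sub, trace_mul_comm, sub_self]

theorem mps_infinitesimal_symmetry (d D : ℕ) (hd : 1 ≤ d) (hD : 1 ≤ D)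
    (A : Fin d → Matrix (Fin D) (Fin D) ℂ)
    (B : Matrix (Fin d) (Fin d) ℂ) (X : Matrix (Fin D) (Fin D) ℂ)
    (hA : ∀ M, ∑ M', B M M' • A M' = X * A M - A M * X) :
    ∀ N, 1 ≤ N →
      (∑ i : Fin N, siteOp B N i).mulVec (mpsPBC A N) = 0 :=
  mps_infinitesimal_symmetry_general d D A B X hA
end

section
/- Let A^{[M]} (M ∈ {0,…,d−1}) be complex D × D matrices and let h be a positive semidefinite Hermitian operator on ℂ^d ⊗ ℂ^d with matrix entries h_{(M_1,M_2),(M_1',M_2')}. Suppose that for all M_1, M_2 the D × D matrix Σ_{M_1',M_2'} h_{(M_1,M_2),(M_1',M_2')} A^{[M_1']} A^{[M_2']} is zero. Then for every N ≥ 2, the periodic-boundary MPS |Ψ_N⟩ defined by the A^{[M]} satisfies h_{i,i+1} |Ψ_N⟩ = 0 for every i ∈ {1,…,N} (site indices taken mod N), where h_{i,i+1} acts as h on the tensor factors i and i+1 and as identity elsewhere. Consequently H |Ψ_N⟩ = 0 for H = Σ_{i=1}^N h_{i,i+1}, and since ⟨φ, H φ⟩ ≥ 0 for all φ, |Ψ_N⟩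 (if nonzero) is a zero-energy ground state of the frustration-free Hamiltonian H. -/
/-!
Splitting off the sites `i ≠ j` identifies `(ℂ^d)^{⊗N}` with
`(ℂ^d ⊗ ℂ^d) ⊗ (ℂ^d)^{⊗(N-2)}`, under which `h_{ij}` becomes `h ⊗ 1`; in particular every
term of `H` is positive semidefinite.
By cyclicity of the trace, the MPS coefficient is `Tr(A^{[M_i]} A^{[M_{i+1}]} R)` with `R` the
product over the remaining sites, so applying `h` on sites `i, i+1` yields
`Tr((Σ h_{(M_i,M_{i+1}),(M_1',M_2')} A^{[M_1']} A^{[M_2']}) R) = 0`.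
-/

open Matrix ComplexOrder

/-- The operator on `(ℂ^d)^{⊗N}` acting as the two-site operator `h` on tensor
factors `i` and `j` and as the identity on all other factors. -/
noncomputable def twoSiteOp {d : ℕ} (h : Matrix (Fin d × Fin d) (Fin d × Fin d) ℂ)
    (N : ℕ) (i j : Fin N) : Matrix (Fin N → Fin d) (Fin N → Fin d) ℂ :=
  Matrix.of fun M M' =>
    h (M i, M j) (M' i, M' j) *
      ∏ k ∈ (Finset.univ.erase i).erase j, (if M k = M' k then 1 else 0)

open scoped Kronecker

theorem Matrix.trace_list_prod_rotate {m R : Type*} [Fintype m] [DecidableEq m] [CommSemiring R]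
    (l : List (Matrix m m R)) (k : ℕ) : trace (l.rotate k).prod = trace l.prod := by
  induction k generalizing l with
  | zero => simp
  | succ k ih =>
    cases l with
    | nil => simp
    | cons a t =>
      rw [List.rotate_cons_succ, ih, List.prod_append, List.prod_singleton, List.prod_cons,
        trace_mul_comm]

theorem List.ofFn_add_eq_rotate {α : Type*} {n : ℕ} [NeZero n] (f : Fin n → α) (c : Fin n) :
    List.ofFn (fun t => f (t + c)) = (List.ofFn f).rotate c := by
  apply List.ext_get (by simp)
  intro k _ _
  simp [Fin.add_def]

@[simps]
def Equiv.piSplitPair {ι α : Type*} [DecidableEq ι] {i j : ι} (hij : i ≠ j) :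
    (ι → α) ≃ (α × α) × ({k // k ≠ i ∧ k ≠ j} → α) where
  toFun M := ((M i, M j), fun k => M k)
  invFun x k := if hi : k = i then x.1.1 else if hj : k = j then x.1.2 else x.2 ⟨k, hi, hj⟩
  left_inv M := by
    funext k
    by_cases hi : k = i
    · subst hi; simp
    · by_cases hj : k = j
      · subst hj; simp [hi]
      · simp [hi, hj]
  right_inv x := by
    ext k
    · simp
    · simp [hij.symm]
    · simp [k.2.1, k.2.2]

section TwoSiteOp

variable {d N : ℕ} {i j : Fin N}

theorem twoSiteOp_eq_submatrix_kronecker (h : Matrix (Fin d × Fin d) (Fin d × Fin d) ℂ)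
    (hij : i ≠ j) :
    twoSiteOp h N i j =
      (h ⊗ₖ (1 : Matrix ({k // k ≠ i ∧ k ≠ j} → Fin d) _ ℂ)).submatrix
        (Equiv.piSplitPair hij) (Equiv.piSplitPair hij) := by
  ext M M'
  simp [twoSiteOp, one_apply, Finset.prod_boole, funext_iff, and_comm]

theorem twoSiteOp_mulVec_apply (h : Matrix (Fin d × Fin d) (Fin d × Fin d) ℂ) (hij : i ≠ j)
    (ψ : (Fin N → Fin d) → ℂ) (M : Fin N → Fin d) :
    (twoSiteOp h N i j *ᵥ ψ) M =
      ∑ p, h (M i, M j) p *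
        ψ ((Equiv.piSplitPair hij).symm (p, (Equiv.piSplitPair hij M).2)) := by
  rw [twoSiteOp_eq_submatrix_kronecker h hij, submatrix_mulVec_equiv]
  simp [mulVec, dotProduct, Fintype.sum_prod_type, one_apply]

theorem Matrix.PosSemidef.twoSiteOp {h : Matrix (Fin d × Fin d) (Fin d × Fin d) ℂ}
    (hh : h.PosSemidef) (hij : i ≠ j) : (twoSiteOp h N i j).PosSemidef := by
  rw [twoSiteOp_eq_submatrix_kronecker h hij]
  exact (hh.kronecker PosSemidef.one).submatrix _

end TwoSiteOp

theorem mpsPBC_eq_trace_mul {d D n : ℕ} (A : Fin d → Matrix (Fin D) (Fin D) ℂ)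
    (σ : Fin (n + 2) → Fin d) (i : Fin (n + 2)) :
    mpsPBC A (n + 2) σ = trace (A (σ i) * A (σ (i + 1)) *
      (List.ofFn fun t : Fin n => A (σ (t.succ.succ + i))).prod) := by
  rw [mpsPBC, ← trace_list_prod_rotate _ i, ← List.ofFn_add_eq_rotate (fun k => A (σ k)) i]
  simp [List.ofFn_succ, mul_assoc, add_comm]

theorem twoSiteOp_mulVec_mpsPBC_eq_zero {d D n : ℕ} {A : Fin d → Matrix (Fin D) (Fin D) ℂ}
    {h : Matrix (Fin d × Fin d) (Fin d × Fin d) ℂ}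
    (hker : ∀ M1 M2 : Fin d, ∑ p : Fin d × Fin d, h (M1, M2) p • (A p.1 * A p.2) = 0)
    (i : Fin (n + 2)) :
    twoSiteOp h (n + 2) i (i + 1) *ᵥ mpsPBC A (n + 2) = 0 := by
  have hij : i ≠ i + 1 := by simp
  funext M
  set R := (List.ofFn fun t : Fin n => A (M (t.succ.succ + i))).prod
  have hR (p : Fin d × Fin d) :
      mpsPBC A (n + 2) ((Equiv.piSplitPair hij).symm (p, (Equiv.piSplitPair hij M).2)) =
        trace (A p.1 * A p.2 * R) := by
    rw [mpsPBC_eq_trace_mul A _ i]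
    have hrest (t : Fin n) : t.succ.succ + i ≠ i ∧ t.succ.succ + i ≠ i + 1 := by
      refine ⟨by simp [Fin.succ_ne_zero], ?_⟩
      rw [add_comm i, Ne, add_left_inj, ← Fin.succ_zero_eq_one, Fin.succ_inj]
      exact Fin.succ_ne_zero t
    simp [R, hij.symm, hrest]
  calc (twoSiteOp h (n + 2) i (i + 1) *ᵥ mpsPBC A (n + 2)) M
      = ∑ p, h (M i, M (i + 1)) p * trace (A p.1 * A p.2 * R) := by
        rw [twoSiteOp_mulVec_apply h hij]; simp only [hR]
    _ = trace ((∑ p, h (M i, M (i + 1)) p • (A p.1 * A p.2)) * R) := by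
        simp [Finset.sum_mul, trace_sum]
    _ = 0 := by simp [hker]

theorem mps_parent_hamiltonian_ground_state (d D : ℕ)
    (A : Fin d → Matrix (Fin D) (Fin D) ℂ)
    (h : Matrix (Fin d × Fin d) (Fin d × Fin d) ℂ) (hpsd : h.PosSemidef)
    (hker : ∀ M1 M2 : Fin d, ∑ p : Fin d × Fin d, h (M1, M2) p • (A p.1 * A p.2) = 0) :
    ∀ N, ∀ hN : 2 ≤ N,
      (∀ i : Fin N,
        (twoSiteOp h N i ⟨((i : ℕ) + 1) % N, Nat.mod_lt _ (by omega)⟩).mulVec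
          (mpsPBC A N) = 0) ∧
      (∑ i : Fin N,
        twoSiteOp h N i ⟨((i : ℕ) + 1) % N, Nat.mod_lt _ (by omega)⟩).mulVec
          (mpsPBC A N) = 0 ∧
      ∀ φ : (Fin N → Fin d) → ℂ,
        0 ≤ star φ ⬝ᵥ (∑ i : Fin N,
          twoSiteOp h N i ⟨((i : ℕ) + 1) % N, Nat.mod_lt _ (by omega)⟩).mulVec φ := by
  intro N hN
  obtain ⟨n, rfl⟩ : ∃ n, N = n + 2 := ⟨N - 2, by omega⟩
  have hnext (i : Fin (n + 2)) :
      (⟨((i : ℕ) + 1) % (n + 2), Nat.mod_lt _ (by omega)⟩ : Fin (n + 2)) = i + 1 := by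
    ext
    simp [Fin.val_add]
  simp only [hnext]
  have hzero (i : Fin (n + 2)) := twoSiteOp_mulVec_mpsPBC_eq_zero (A := A) hker i
  refine ⟨hzero, by simp [sum_mulVec, hzero], ?_⟩
  exact (posSemidef_sum _ fun i _ => hpsd.twoSiteOp (by simp)).dotProduct_mulVec_nonneg
end
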